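/- Let I ⊆ R = C[x_1,...,x_N] be a monomial ideal and let I' ⊆ R' = C[x_1,...,x_N,y] be the partial polarization of I with respect to x_i. Then for all positive integers k, Tor_k^{R'}(R'/I', R'/⟨y - x_i⟩) = 0. -/

import Mathlib

/-!
Write `y = X none` and `x_i = X (some i)`; the point is that `y - x_i` is a non-zero-divisor
on `R'/I'`. Every generator of `I'` has `y`-degree at most one, and this alone makes
`(y - x_i) p ∈ I'` force `μ y ∈ I'` and `μ x_i ∈ I'` for every monomial `μ` of `p`: the term
`μ y` of `(y - x_i) p` can only cancel against `μ' x_i` with `μ' = μ y / x_i` of larger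
`y`-degree, so one argues downwards from the largest `y`-degree. For the polarized generators,
`μ y, μ x_i ∈ I'` give `μ ∈ I'`.
For `a` regular on `R'` and on `M`, the complex `0 → R' --a--> R' → 0` resolves `R'/(a)`, and
tensoring it with `M` leaves `0 → M --a--> M → 0`, which is exact in positive degrees.
-/

open MvPolynomial

/-- Embedding of exponent vectors along `some : Fin N → Option (Fin N)`
(where `none` plays the role of the new variable `y`). -/
noncomputable def embedExp {N : ℕ} (a : Fin N →₀ ℕ) : Option (Fin N) →₀ ℕ :=
  Finsupp.mapDomain some a

/-- The exponent of a partially polarized generator: if `x_i` occurs with exponent `≥ 2`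
in `x^a`, replace one factor of `x_i` by the new variable `y` (indexed by `none`). -/
noncomputable def partialPolarGen {N : ℕ} (i : Fin N) (a : Fin N →₀ ℕ) :
    Option (Fin N) →₀ ℕ :=
  if 2 ≤ a i then embedExp (a - Finsupp.single i 1) + Finsupp.single none 1 else embedExp a

theorem Finsupp.le_of_le_add_single {σ : Type*} {a b : σ →₀ ℕ} {u : σ}
    (h : a ≤ b + single u 1) (hu : a u ≤ b u) : a ≤ b := by
  intro w
  by_cases hw : w = u
  · exact hw ▸ hu
  · simpa [Finsupp.single_apply, Ne.symm hw] using h w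

namespace MvPolynomial

variable {σ R : Type*} [CommRing R] {s : Set (σ →₀ ℕ)} {u v : σ} {p : MvPolynomial σ R}
  {μ : σ →₀ ℕ}

theorem coeff_add_single_X_mul (μ : σ →₀ ℕ) (w : σ) (p : MvPolynomial σ R) :
    coeff (μ + Finsupp.single w 1) (X w * p) = coeff μ p := by
  rw [add_comm, coeff_X_mul]

theorem exists_add_single_eq_of_coeff_X_mul_ne_zero {ν : σ →₀ ℕ} {w : σ}
    (h : coeff ν (X w * p) ≠ 0) : ∃ ν' ∈ p.support, ν' + Finsupp.single w 1 = ν := by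
  have hν : ν ∈ (X w * p).support := mem_support_iff.2 h
  simpa [add_comm] using hν

theorem add_single_left_mem_upperClosure_of_X_sub_X_mul_mem (huv : u ≠ v)
    (hs : ∀ a ∈ s, a u ≤ 1)
    (h : (X u - X v) * p ∈ Ideal.span ((fun a => monomial a (1 : R)) '' s))
    (hμ : μ ∈ p.support) :
    μ + Finsupp.single u 1 ∈ upperClosure s := by
  classical
  rw [mem_ideal_span_monomial_image] at h
  by_contra hμs
  obtain ⟨ν, hνB, hmax⟩ :=
    (p.support.filter fun ν => ν + Finsupp.single u 1 ∉ upperClosure s).exists_max_image (· u)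
      ⟨μ, Finset.mem_filter.2 ⟨hμ, hμs⟩⟩
  obtain ⟨hν, hνs⟩ := Finset.mem_filter.1 hνB
  apply hνs
  by_cases hcoeff : coeff (ν + Finsupp.single u 1) ((X u - X v) * p) = 0
  · rw [sub_mul, coeff_sub, sub_eq_zero, coeff_add_single_X_mul] at hcoeff
    obtain ⟨ν', hν', hνν'⟩ :=
      exists_add_single_eq_of_coeff_X_mul_ne_zero (hcoeff ▸ mem_support_iff.1 hν)
    have hν'u : ν' u = ν u + 1 := by
      simpa [Finsupp.single_apply, huv, Ne.symm huv] using congr($hνν' u)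
    obtain ⟨a, has, hle⟩ : ν' + Finsupp.single u 1 ∈ upperClosure s := by
      by_contra h'
      have := hmax ν' (Finset.mem_filter.2 ⟨hν', h'⟩)
      omega
    refine ⟨a, has, Finsupp.le_of_le_add_single (u := u) ?_ ?_⟩
    · calc a ≤ ν' + Finsupp.single u 1 := hle
        _ ≤ ν' + Finsupp.single v 1 + Finsupp.single u 1 := add_le_add_left le_self_add _
        _ = ν + Finsupp.single u 1 + Finsupp.single u 1 := by rw [hνν']
    · have := hs a has
      simp only [Finsupp.add_apply, Finsupp.single_eq_same]
      omega
  · exact h _ (mem_support_iff.2 hcoeff)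

theorem add_single_right_mem_upperClosure_of_X_sub_X_mul_mem (huv : u ≠ v)
    (hs : ∀ a ∈ s, a u ≤ 1)
    (h : (X u - X v) * p ∈ Ideal.span ((fun a => monomial a (1 : R)) '' s))
    (hμ : μ ∈ p.support) :
    μ + Finsupp.single v 1 ∈ upperClosure s := by
  by_cases hcoeff : coeff (μ + Finsupp.single v 1) ((X u - X v) * p) = 0
  · rw [sub_mul, coeff_sub, sub_eq_zero, coeff_add_single_X_mul] at hcoeff
    obtain ⟨μ', hμ', hμμ'⟩ :=
      exists_add_single_eq_of_coeff_X_mul_ne_zero (hcoeff.symm ▸ mem_support_iff.1 hμ)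
    exact hμμ' ▸ add_single_left_mem_upperClosure_of_X_sub_X_mul_mem huv hs h hμ'
  · exact (mem_ideal_span_monomial_image.1 h) _ (mem_support_iff.2 hcoeff)

end MvPolynomial

section partialPolarGen

variable {N : ℕ} (i : Fin N) (a : Fin N →₀ ℕ)

theorem embedExp_none : embedExp a none = 0 :=
  Finsupp.mapDomain_of_notMem_range _ _ (by simp)

theorem embedExp_some (j : Fin N) : embedExp a (some j) = a j :=
  Finsupp.mapDomain_apply (Option.some_injective _) a j

theorem partialPolarGen_none : partialPolarGen i a none = if 2 ≤ a i then 1 else 0 := by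
  unfold partialPolarGen
  split_ifs <;> simp [embedExp_none]

theorem partialPolarGen_some_self :
    partialPolarGen i a (some i) = if 2 ≤ a i then a i - 1 else a i := by
  unfold partialPolarGen
  split_ifs <;> simp [embedExp_some]

theorem partialPolarGen_none_le_one : partialPolarGen i a none ≤ 1 := by
  rw [partialPolarGen_none]
  split_ifs <;> omega

variable {i} {S : Set (Fin N →₀ ℕ)} {μ : Option (Fin N) →₀ ℕ}

theorem mem_upperClosure_partialPolarGen_of_add_single
    (hy : μ + Finsupp.single none 1 ∈ upperClosure (partialPolarGen i '' S))
    (hx : μ + Finsupp.single (some i) 1 ∈ upperClosure (partialPolarGen i '' S)) :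
    μ ∈ upperClosure (partialPolarGen i '' S) := by
  obtain ⟨_, ⟨a, ha, rfl⟩, hya⟩ := hy
  obtain ⟨_, ⟨b, hb, rfl⟩, hxb⟩ := hx
  have hya_none : partialPolarGen i a none ≤ μ none + 1 := by simpa using hya none
  by_cases hμa : 1 ≤ μ none ∨ a i < 2
  · refine ⟨_, ⟨a, ha, rfl⟩, Finsupp.le_of_le_add_single hya ?_⟩
    rw [partialPolarGen_none]
    split_ifs <;> omega
  · push Not at hμa
    have hya_some : a i - 1 ≤ μ (some i) := by
      simpa [partialPolarGen_some_self, hμa.2, Finsupp.single_apply] using hya (some i)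
    have hxb_none : partialPolarGen i b none ≤ μ none := by
      simpa [Finsupp.single_apply] using hxb none
    refine ⟨_, ⟨b, hb, rfl⟩, Finsupp.le_of_le_add_single hxb ?_⟩
    rw [partialPolarGen_none] at hxb_none
    rw [partialPolarGen_some_self]
    split_ifs at hxb_none ⊢ <;> omega

theorem isSMulRegular_quotient_span_partialPolarGen {R : Type*} [CommRing R] (i : Fin N)
    (S : Set (Fin N →₀ ℕ)) :
    IsSMulRegular
      (MvPolynomial (Option (Fin N)) R ⧸
        Ideal.span ((fun a => monomial a (1 : R)) '' (partialPolarGen i '' S)))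
      (X none - X (some i) : MvPolynomial (Option (Fin N)) R) := by
  rw [isSMulRegular_quotient_iff_mem_of_smul_mem]
  intro p hp
  have hS : ∀ a ∈ partialPolarGen i '' S, a none ≤ 1 := by
    rintro _ ⟨a, -, rfl⟩
    exact partialPolarGen_none_le_one i a
  have hne : (none : Option (Fin N)) ≠ some i := (Option.some_ne_none i).symm
  rw [mem_ideal_span_monomial_image]
  intro μ hμ
  exact mem_upperClosure_partialPolarGen_of_add_single
    (add_single_left_mem_upperClosure_of_X_sub_X_mul_mem hne hS hp hμ)
    (add_single_right_mem_upperClosure_of_X_sub_X_mul_mem hne hS hp hμ)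

end partialPolarGen

open CategoryTheory Limits MonoidalCategory

theorem ChainComplex.exactAt_succ_of_mono_d_one_zero {C : Type*} [Category C] [Abelian C]
    (K : ChainComplex C ℕ) (hK : ∀ n, IsZero (K.X (n + 2))) [Mono (K.d 1 0)] (n : ℕ) :
    K.ExactAt (n + 1) := by
  rw [HomologicalComplex.exactAt_iff' K (n + 2) (n + 1) n (by simp) (by simp)]
  cases n with
  | zero => exact (ShortComplex.exact_iff_mono _ ((hK 0).eq_of_src _ _)).2 ‹_›
  | succ n => exact ShortComplex.exact_of_isZero_X₂ _ (hK n)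

universe u

section Koszul

variable {A : Type u} [CommRing A]

theorem ModuleCat.mono_smul_id {M : ModuleCat.{u} A} {a : A} (ha : IsSMulRegular M a) :
    Mono (a • 𝟙 M) :=
  (ModuleCat.mono_iff_injective _).2 ha

variable (A) in
noncomputable def koszulComplexX : ℕ → ModuleCat.{u} A
  | 0 | 1 => ModuleCat.of A A
  | _ + 2 => ModuleCat.of A PUnit

noncomputable def koszulComplexD (a : A) : ∀ n, koszulComplexX A (n + 1) ⟶ koszulComplexX A n
  | 0 => a • 𝟙 (ModuleCat.of A A)
  | _ + 1 => 0

noncomputable def koszulComplex (a : A) : ChainComplex (ModuleCat.{u} A) ℕ :=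
  ChainComplex.of (koszulComplexX A) (koszulComplexD a)
    (fun | 0 => zero_comp | _ + 1 => zero_comp)

namespace koszulComplex

variable (a : A)

theorem d_one_zero : (koszulComplex a).d 1 0 = a • 𝟙 (ModuleCat.of A A) :=
  ChainComplex.of_d _ (koszulComplexD a) 0

theorem isZero_X_add_two (n : ℕ) : IsZero ((koszulComplex a).X (n + 2)) :=
  ModuleCat.isZero_of_subsingleton (ModuleCat.of A PUnit)

instance projective_X (n : ℕ) : Projective ((koszulComplex a).X n) :=
  match n with
  | 0 | 1 => (IsProjective.iff_projective A).1 inferInstance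
  | n + 2 => (isZero_X_add_two a n).projective

noncomputable def π : koszulComplex a ⟶ (ChainComplex.single₀ (ModuleCat A)).obj
    (ModuleCat.of A (A ⧸ Ideal.span {a})) :=
  (ChainComplex.toSingle₀Equiv _ _).symm
    ⟨ModuleCat.ofHom (Ideal.span {a}).mkQ, by
      ext
      change (Ideal.span {a}).mkQ (a • 1) = 0
      simp⟩

theorem π_f_zero : (π a).f 0 = ModuleCat.ofHom (Ideal.span {a}).mkQ :=
  ChainComplex.toSingle₀Equiv_symm_apply_f_zero _ _

theorem quasiIso_π (ha : IsSMulRegular A a) : QuasiIso (π a) where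
  quasiIsoAt
  | 0 => by
    rw [ChainComplex.quasiIsoAt₀_iff, ShortComplex.quasiIso_iff_of_zeros' _ rfl rfl rfl]
    refine ⟨?_, ?_⟩
    · rw [ShortComplex.moduleCat_exact_iff]
      intro x hx
      obtain ⟨y, hy⟩ := Ideal.mem_span_singleton'.1 ((Submodule.Quotient.mk_eq_zero _).1 hx)
      refine ⟨y, ?_⟩
      change ((koszulComplex a).d 1 0).hom y = x
      rw [d_one_zero]
      exact (mul_comm a y).trans hy
    · change Epi ((π a).f 0)
      rw [π_f_zero]
      exact (ModuleCat.epi_iff_surjective _).2 (Submodule.mkQ_surjective _)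
  | n + 1 => by
    rw [quasiIsoAt_iff_exactAt' _ _ (ChainComplex.exactAt_succ_single_obj _ _)]
    have : Mono ((koszulComplex a).d 1 0) := d_one_zero a ▸ ModuleCat.mono_smul_id ha
    exact (koszulComplex a).exactAt_succ_of_mono_d_one_zero (isZero_X_add_two a) n

end koszulComplex

noncomputable def koszulResolution {a : A} (ha : IsSMulRegular A a) :
    ProjectiveResolution (ModuleCat.of A (A ⧸ Ideal.span {a})) where
  complex := koszulComplex a
  π := koszulComplex.π a
  quasiIso := koszulComplex.quasiIso_π a ha

theorem isZero_tor_succ_quotient_span_singleton {a : A} (ha : IsSMulRegular A a)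
    (M : ModuleCat.{u} A) (hM : IsSMulRegular M a) (n : ℕ) :
    IsZero (((Tor (ModuleCat A) (n + 1)).obj M).obj (ModuleCat.of A (A ⧸ Ideal.span {a}))) := by
  let F := (tensoringLeft (ModuleCat A)).obj M
  have : F.Linear A := inferInstanceAs ((tensorLeft M).Linear A)
  refine IsZero.of_iso ?_ ((koszulResolution ha).isoLeftDerivedObj F (n + 1))
  change IsZero (HomologicalComplex.homology _ (n + 1))
  rw [← HomologicalComplex.exactAt_iff_isZero_homology]
  have hFa : IsSMulRegular (F.obj (ModuleCat.of A A)) a :=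
    ((TensorProduct.rid A M).isSMulRegular_congr a).2 hM
  have : Mono (((F.mapHomologicalComplex _).obj (koszulResolution ha).complex).d 1 0) := by
    have hd : F.map ((koszulComplex a).d 1 0) = a • 𝟙 (F.obj (ModuleCat.of A A)) := by
      rw [koszulComplex.d_one_zero]
      exact (F.map_smul _ _).trans (congrArg (a • ·) (F.map_id _))
    change Mono (F.map ((koszulComplex a).d 1 0))
    rw [hd]
    exact ModuleCat.mono_smul_id hFa
  exact ChainComplex.exactAt_succ_of_mono_d_one_zero _
    (fun n => F.map_isZero (koszulComplex.isZero_X_add_two a n)) n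

end Koszul

theorem tor_partial_polarization_vanishes_general {N s : ℕ} (i : Fin N)
    (g : Fin s → (Fin N →₀ ℕ))
    (I' : Ideal (MvPolynomial (Option (Fin N)) ℂ))
    (hI' : I' = Ideal.span
      (Set.range fun j => MvPolynomial.monomial (partialPolarGen i (g j)) (1 : ℂ)))
    (k : ℕ) (hk : 0 < k) :
    Limits.IsZero
      (((Tor (ModuleCat (MvPolynomial (Option (Fin N)) ℂ)) k).obj
          (ModuleCat.of (MvPolynomial (Option (Fin N)) ℂ)
            (MvPolynomial (Option (Fin N)) ℂ ⧸ I'))).obj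
        (ModuleCat.of (MvPolynomial (Option (Fin N)) ℂ)
          (MvPolynomial (Option (Fin N)) ℂ ⧸
            (Ideal.span {MvPolynomial.X none - MvPolynomial.X (some i)} :
              Ideal (MvPolynomial (Option (Fin N)) ℂ))))) := by
  obtain ⟨n, rfl⟩ := Nat.exists_eq_add_one_of_ne_zero hk.ne'
  have hI'_image : I' = Ideal.span
      ((fun a => monomial a (1 : ℂ)) '' (partialPolarGen i '' Set.range g)) := by
    rw [hI', Set.image_image, ← Set.range_comp]
    rfl
  have hX : (X none - X (some i) : MvPolynomial (Option (Fin N)) ℂ) ≠ 0 :=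
    sub_ne_zero.2 ((X_injective (R := ℂ)).ne (Option.some_ne_none i).symm)
  subst hI'_image
  exact isZero_tor_succ_quotient_span_singleton (IsSMulRegular.of_ne_zero hX) (ModuleCat.of _ _)
    (isSMulRegular_quotient_span_partialPolarGen i (Set.range g)) n

/-- `Tor_k^{R'}(R'/I', R'/⟨y - x_i⟩) = 0` for all positive `k`, where `I'`
is the partial polarization of the monomial ideal `I` with respect to `x_i`. -/
theorem tor_partial_polarization_vanishes {N s : ℕ} (i : Fin N)
    (g : Fin s → (Fin N →₀ ℕ))
    (I : Ideal (MvPolynomial (Fin N) ℂ))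
    (hgen : I = Ideal.span (Set.range fun j => MvPolynomial.monomial (g j) (1 : ℂ)))
    (hmin : ∀ j k : Fin s, g j ≤ g k → j = k)
    (hx : ∃ j, 2 ≤ g j i)
    (I' : Ideal (MvPolynomial (Option (Fin N)) ℂ))
    (hI' : I' = Ideal.span
      (Set.range fun j => MvPolynomial.monomial (partialPolarGen i (g j)) (1 : ℂ)))
    (k : ℕ) (hk : 0 < k) :
    Limits.IsZero
      (((Tor (ModuleCat (MvPolynomial (Option (Fin N)) ℂ)) k).obj
          (ModuleCat.of (MvPolynomial (Option (Fin N)) ℂ)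
            (MvPolynomial (Option (Fin N)) ℂ ⧸ I'))).obj
        (ModuleCat.of (MvPolynomial (Option (Fin N)) ℂ)
          (MvPolynomial (Option (Fin N)) ℂ ⧸
            (Ideal.span {MvPolynomial.X none - MvPolynomial.X (some i)} :
              Ideal (MvPolynomial (Option (Fin N)) ℂ))))) :=
  tor_partial_polarization_vanishes_general i g I' hI' k hk
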